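/- arXiv:0704.0875 — 2 statements merged into one kernel-verified Lean document; each statement's English description precedes it below -/
import Mathlib

section
/- If a ≥ 1 and b ≥ 1 are integers with gcd(a, b) > 1, then R_a · R_b does not divide R_{ab}, where R_n = (10^n - 1)/9. -/
def repunit (n : ℕ) : ℕ := (10 ^ n - 1) / 9

lemma nine_dvd (n : ℕ) : 9 ∣ 10 ^ n - 1 := by
  have h1 : 10 ^ n % 9 = 1 := by
    rw [Nat.pow_mod]; simp
  have h2 : 1 ≤ 10 ^ n := Nat.one_le_pow _ _ (by norm_num)
  omega

lemma nine_mul_repunit (n : ℕ) : 9 * repunit n = 10 ^ n - 1 :=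
  Nat.mul_div_cancel' (nine_dvd n)

lemma repunit_pos {n : ℕ} (hn : 1 ≤ n) : 0 < repunit n := by
  have h := nine_mul_repunit n
  have : 10 ≤ 10 ^ n := by
    calc 10 = 10 ^ 1 := by norm_num
    _ ≤ 10 ^ n := Nat.pow_le_pow_right (by norm_num) hn
  omega

lemma lte_lemma {p : ℕ} (hp : p.Prime) (hp2 : p ≠ 2) {x : ℕ} (hx : 2 ≤ x)
    (hdvd : p ∣ x - 1) {s : ℕ} (hs : s ≠ 0) :
    padicValNat p (x ^ s - 1) = padicValNat p (x - 1) + padicValNat p s := by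
  haveI : Fact p.Prime := ⟨hp⟩
  have hodd : Odd p := hp.odd_of_ne_two hp2
  have hnx : ¬ p ∣ x := by
    intro hpx
    have h1 : p ∣ x - (x - 1) := Nat.dvd_sub hpx hdvd
    have : x - (x - 1) = 1 := by omega
    rw [this] at h1
    exact hp.one_lt.ne' (Nat.eq_one_of_dvd_one h1)
  have := padicValNat.pow_sub_pow (y := 1) hodd (by omega) (by simpa using hdvd) hnx hs
  simpa using this

lemma pow_gt {d : ℕ} (hd : 2 ≤ d) : 9 * d + 1 < 10 ^ d := by
  induction d with
  | zero => omega
  | succ n ih =>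
    rcases Nat.lt_or_ge n 2 with hn | hn
    · have hn1 : n = 1 := by omega
      subst hn1; norm_num
    · have := ih hn
      have h10 : 10 ^ (n + 1) = 10 * 10 ^ n := by ring
      omega

theorem repunit_mul_not_dvd_of_not_coprime (a b : ℕ) (ha : 1 ≤ a) (hb : 1 ≤ b)
    (h : 1 < Nat.gcd a b) : ¬ repunit a * repunit b ∣ repunit (a * b) := by
  intro hdvd
  set d := Nat.gcd a b with hdgcd
  have hd2 : 2 ≤ d := h
  obtain ⟨s, hs⟩ := Nat.gcd_dvd_left a b
  obtain ⟨t, ht⟩ := Nat.gcd_dvd_right a b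
  rw [← hdgcd] at hs ht
  clear_value d
  have hs0 : s ≠ 0 := by rintro rfl; omega
  have ht0 : t ≠ 0 := by rintro rfl; omega
  have hXpos : ∀ n : ℕ, 1 ≤ n → 0 < 10 ^ n - 1 := fun n hn => by
    have := repunit_pos hn; have := nine_mul_repunit n; omega
  -- find a prime p with v_p(9d) < v_p(10^d - 1)
  have hnd : ¬ (10 ^ d - 1 ∣ 9 * d) := by
    intro hdd
    have h1 := Nat.le_of_dvd (by omega) hdd
    have := pow_gt hd2
    omega
  have hne : ¬ ((10 ^ d - 1).factorization ≤ (9 * d).factorization) := by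
    intro hle
    exact hnd ((Nat.factorization_le_iff_dvd (by have := hXpos d (by omega); omega)
      (by omega)).mp hle)
  rw [Finsupp.le_def] at hne
  push_neg at hne
  obtain ⟨p, hplt⟩ := hne
  have hpfpos : (10 ^ d - 1).factorization p ≠ 0 := by omega
  have hpp : p.Prime := Nat.prime_of_mem_primeFactors
    (by rw [← Nat.support_factorization]; exact Finsupp.mem_support_iff.mpr hpfpos)
  haveI : Fact p.Prime := ⟨hpp⟩
  have hpdvd : p ∣ 10 ^ d - 1 := Nat.dvd_of_factorization_pos hpfpos
  have hp2 : p ≠ 2 := by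
    rintro rfl
    have hodd : (10 ^ d - 1) % 2 = 1 := by
      have h10 : 10 ^ d % 2 = 0 := by
        rw [Nat.pow_mod]; simp [Nat.zero_pow (show 0 < d by omega)]
      have := hXpos d (by omega)
      omega
    omega
  -- rewrite factorizations as padicValNat
  rw [Nat.factorization_def _ hpp, Nat.factorization_def _ hpp] at hplt
  have hmul9d : padicValNat p (9 * d) = padicValNat p 9 + padicValNat p d :=
    padicValNat.mul (by norm_num) (by omega)
  have hp3 : p ≠ 3 := by
    rintro rfl
    have hlte := lte_lemma (p := 3) hpp hp2 (x := 10) (by norm_num) (by norm_num)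
      (show d ≠ 0 by omega)
    simp only [show (10:ℕ) - 1 = 9 by norm_num] at hlte
    omega
  have hp9 : padicValNat p 9 = 0 := by
    apply padicValNat.eq_zero_of_not_dvd
    intro hp9d
    have h3 : p ∣ 3 := hpp.dvd_of_dvd_pow (n := 2) (by norm_num [hp9d])
    exact hp3 ((Nat.prime_dvd_prime_iff_eq hpp (by norm_num)).mp h3)
  have hVd : padicValNat p d < padicValNat p (10 ^ d - 1) := by omega
  -- LTE with base 10^d
  have hX2 : 2 ≤ 10 ^ d := by have := hXpos d (by omega); omega
  have hA : padicValNat p (10 ^ a - 1)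
      = padicValNat p (10 ^ d - 1) + padicValNat p s := by
    have h10a : (10:ℕ) ^ a = (10 ^ d) ^ s := by rw [hs, pow_mul]
    rw [h10a]
    exact lte_lemma hpp hp2 hX2 hpdvd hs0
  have hB : padicValNat p (10 ^ b - 1)
      = padicValNat p (10 ^ d - 1) + padicValNat p t := by
    have h10b : (10:ℕ) ^ b = (10 ^ d) ^ t := by rw [ht, pow_mul]
    rw [h10b]
    exact lte_lemma hpp hp2 hX2 hpdvd ht0
  have hAB : padicValNat p (10 ^ (a * b) - 1)
      = padicValNat p (10 ^ d - 1) + (padicValNat p s + (padicValNat p d + padicValNat p t)) := by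
    have h10ab : (10:ℕ) ^ (a * b) = (10 ^ d) ^ (s * (d * t)) := by
      rw [← pow_mul]
      congr 1
      rw [hs, ht]; ring
    rw [h10ab, lte_lemma hpp hp2 hX2 hpdvd (by positivity),
      padicValNat.mul hs0 (by positivity),
      padicValNat.mul (show d ≠ 0 by omega) ht0]
  -- relate repunit valuations
  have hrep : ∀ n : ℕ, 1 ≤ n → padicValNat p (repunit n) = padicValNat p (10 ^ n - 1) := by
    intro n hn
    have h9r : 9 * repunit n = 10 ^ n - 1 := nine_mul_repunit n
    have := padicValNat.mul (p := p) (show (9:ℕ) ≠ 0 by norm_num)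
      (show repunit n ≠ 0 by have := repunit_pos hn; omega)
    rw [h9r] at this
    omega
  -- divisibility gives valuation inequality
  have hRab : 1 ≤ a * b := Nat.one_le_iff_ne_zero.mpr (by positivity)
  have hfle := (Nat.factorization_le_iff_dvd
    (show repunit a * repunit b ≠ 0 by
      have := repunit_pos ha; have := repunit_pos hb; positivity)
    (show repunit (a * b) ≠ 0 by have := repunit_pos hRab; omega)).mpr hdvd
  have hle := hfle p
  rw [Nat.factorization_def _ hpp, Nat.factorization_def _ hpp,
    padicValNat.mul (show repunit a ≠ 0 by have := repunit_pos ha; omega)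
      (show repunit b ≠ 0 by have := repunit_pos hb; omega),
    hrep a ha, hrep b hb, hrep (a * b) hRab, hA, hB, hAB] at hle
  omega
end

section
/- Let p and q be odd primes such that q divides R_p but q^2 does not divide R_p, where R_n = (10^n - 1)/9. Then for every integer r with 0 < r < q, q^2 does not divide R_{pr}. -/
/-!
Since `R_{mn} = R_m · (1 + 10^m + ⋯ + 10^{m(n-1)})` and `q ∣ R_m` forces `10^m ≡ 1 (mod q)`, the
second factor is `≡ n (mod q)`, hence prime to `q` when `0 < n < q`; so the `q`-adic valuation of
`R_{mn}` equals that of `R_m`.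
-/

open Finset

lemma nine_mul_repunit_add_one (n : ℕ) : 9 * repunit n + 1 = 10 ^ n := by
  have h9 : 9 ∣ 10 ^ n - 1 := by simpa using Nat.sub_dvd_pow_sub_pow 10 1 n
  have hpos : 1 ≤ 10 ^ n := Nat.one_le_pow _ _ (by norm_num)
  rw [repunit, Nat.mul_div_cancel' h9]
  omega

lemma repunit_mul (m n : ℕ) :
    repunit (m * n) = repunit m * ∑ i ∈ range n, (10 ^ m) ^ i := by
  have key := geom_sum_mul_add (9 * repunit m) n
  rw [nine_mul_repunit_add_one, ← pow_mul, ← nine_mul_repunit_add_one (m * n)] at key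
  linarith

lemma ten_pow_eq_one_of_dvd_repunit {q m : ℕ} (h : q ∣ repunit m) : (10 : ZMod q) ^ m = 1 := by
  have := congrArg (Nat.cast : ℕ → ZMod q) (nine_mul_repunit_add_one m)
  push_cast at this
  rwa [(ZMod.natCast_eq_zero_iff _ _).2 h, mul_zero, zero_add, eq_comm] at this

lemma natCast_geom_sum_ten_pow_of_dvd_repunit {q m : ℕ} (h : q ∣ repunit m) (n : ℕ) :
    ((∑ i ∈ range n, (10 ^ m) ^ i : ℕ) : ZMod q) = n := by
  push_cast
  simp [ten_pow_eq_one_of_dvd_repunit h]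

theorem sq_not_dvd_repunit_mul_general (p q : ℕ)
    (hq : q.Prime) (h1 : q ∣ repunit p) (h2 : ¬ q ^ 2 ∣ repunit p) :
    ∀ r : ℕ, 0 < r → r < q → ¬ q ^ 2 ∣ repunit (p * r) := by
  intro r hr hrq hdvd
  rw [repunit_mul] at hdvd
  have hS : ¬ q ∣ ∑ i ∈ range r, (10 ^ p) ^ i := by
    rw [← ZMod.natCast_eq_zero_iff, natCast_geom_sum_ten_pow_of_dvd_repunit h1,
      ZMod.natCast_eq_zero_iff]
    exact Nat.not_dvd_of_pos_of_lt hr hrq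
  exact h2 ((((hq.coprime_iff_not_dvd).2 hS).pow_left 2).dvd_of_dvd_mul_right hdvd)

theorem sq_not_dvd_repunit_mul (p q : ℕ) (hp : p.Prime) (hpo : Odd p)
    (hq : q.Prime) (hqo : Odd q) (h1 : q ∣ repunit p) (h2 : ¬ q ^ 2 ∣ repunit p) :
    ∀ r : ℕ, 0 < r → r < q → ¬ q ^ 2 ∣ repunit (p * r) :=
  sq_not_dvd_repunit_mul_general p q hq h1 h2
end
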